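/- Let G be a connected multigraph on [n] = {1,…,n} rooted at n, and let e = {n,i} be an edge of G (i ≠ n, μ(n,i) ≥ 1) that is neither a loop nor a bridge, i.e. the multigraph G − e (with multiplicity μ(n,i) decreased by 1) is still connected. Let G∖e be the contraction of e: the multigraph on vertex set [n]∖{i} rooted at n with multiplicities μ'(n,w) = μ(n,w) + μ(i,w) for w ∉ {n,i} and μ'(u,w) = μ(u,w) for u,w ∉ {n,i}. Then Q_G(q) = q · Q_{G−e}(q) + Q_{G∖e}(q). -/

import Mathlib

open scoped Classical

/-- Out-degree of vertex `i` with respect to a vertex subset `I`. -/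
def outdeg {V : Type*} [Fintype V] [DecidableEq V] (μ : V → V → ℕ)
    (I : Finset V) (i : V) : ℕ :=
  ∑ j ∈ Iᶜ, μ i j

/-- An `(H,r)`-parking function of the multigraph `μ` rooted at `r`. -/
def IsParking {V : Type*} [Fintype V] [DecidableEq V] (μ : V → V → ℕ) (r : V)
    (f : V → ℤ) : Prop :=
  f r = -1 ∧ (∀ v, v ≠ r → 0 ≤ f v) ∧
  ∀ I : Finset V, I.Nonempty → r ∉ I → ∃ i ∈ I, f i < (outdeg μ I i : ℤ)

/-- The generating polynomial `Q_{H,r}(q) = Σ_f q^{Σ_{v ≠ r} f(v)}` of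
`(H,r)`-parking functions. -/
noncomputable def Qpoly {V : Type*} [Fintype V] [DecidableEq V] (μ : V → V → ℕ)
    (r : V) : Polynomial ℤ :=
  ∑ᶠ f ∈ {f : V → ℤ | IsParking μ r f},
    (Polynomial.X : Polynomial ℤ) ^ (∑ v ∈ Finset.univ.erase r, f v).toNat

/-- The simple support graph of the multigraph `μ`. -/
def supportGraph {V : Type*} (μ : V → V → ℕ) : SimpleGraph V where
  Adj i j := i ≠ j ∧ 1 ≤ μ i j ∧ 1 ≤ μ j i
  symm := ⟨fun i j h => ⟨h.1.symm, h.2.2, h.2.1⟩⟩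
  loopless := ⟨fun i h => h.1 rfl⟩

/-- The multigraph obtained by deleting one copy of the edge `{a,b}`. -/
def deleteEdge {V : Type*} [DecidableEq V] (μ : V → V → ℕ) (a b : V) : V → V → ℕ :=
  fun u v => μ u v - if (u = a ∧ v = b) ∨ (u = b ∧ v = a) then 1 else 0

/-- The multigraph obtained by contracting the edge `{a,b}` (identifying `b` with
`a`): on vertex set `V \ {b}`, multiplicities `μ'(a,w) = μ(a,w) + μ(b,w)` for
`w ∉ {a,b}` and `μ'(u,w) = μ(u,w)` for `u,w ∉ {a,b}` (loops are irrelevant). -/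
def contractEdge {V : Type*} [DecidableEq V] (μ : V → V → ℕ) (a b : V) :
    {v : V // v ≠ b} → {v : V // v ≠ b} → ℕ :=
  fun u w =>
    if u.val = a ∧ w.val ≠ a then μ a w.val + μ b w.val
    else if w.val = a ∧ u.val ≠ a then μ u.val a + μ u.val b
    else μ u.val w.val

/-!
Split the parking functions `f` of `G` according to whether `f i = 0`. If `f i > 0`, then
`f - Pi.single i 1` is a parking function of `G - e`: removing `e` lowers `outdeg_I i` by one
for every root-free `I ∋ i` and changes no other out-degree, and the weight drops by one.
If `f i = 0`, every root-free `I ∋ i` is witnessed by `i` itself, since `i` is joined to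
the root; for `I ∌ i` the out-degrees in `G` are those of the image of `I` in `G ∖ e`, so
restriction to `V ∖ {i}` is a weight-preserving bijection onto the parking functions of `G ∖ e`.
-/

section

variable {V : Type*} [DecidableEq V] {μ : V → V → ℕ} {r i : V}

theorem deleteEdge_add_ite (hμ : 1 ≤ μ i r) {v : V} (hv : v ≠ r) (j : V) :
    deleteEdge μ r i v j + (if v = i ∧ j = r then 1 else 0) = μ v j := by
  unfold deleteEdge
  split_ifs <;> grind

theorem contractEdge_apply_of_ne (hri : r ≠ i) {v : {v : V // v ≠ i}} (hv : v.val ≠ r)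
    (w : {v : V // v ≠ i}) :
    contractEdge μ r i v w = μ v w + if w = ⟨r, hri⟩ then μ v i else 0 := by
  unfold contractEdge
  split_ifs <;> simp_all [Subtype.ext_iff]

def extendByZero (i : V) (g : {v : V // v ≠ i} → ℤ) : V → ℤ :=
  fun v => if h : v = i then 0 else g ⟨v, h⟩

@[simp]
theorem extendByZero_self (g : {v : V // v ≠ i} → ℤ) : extendByZero i g i = 0 :=
  dif_pos rfl

@[simp]
theorem extendByZero_coe (g : {v : V // v ≠ i} → ℤ) (w : {v : V // v ≠ i}) :
    extendByZero i g w = g w :=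
  dif_neg w.2

theorem extendByZero_injective : Function.Injective (extendByZero (V := V) i) :=
  fun g g' h => funext fun w => by simpa using congrFun h w

theorem extendByZero_restrict {f : V → ℤ} (hf : f i = 0) :
    extendByZero i (fun w => f w) = f := by
  funext v
  by_cases hv : v = i
  · subst hv; simp [hf]
  · exact dif_neg hv

end

variable {V : Type*} [Fintype V] [DecidableEq V]

theorem isParking_finite (μ : V → V → ℕ) (r : V) :
    {f : V → ℤ | IsParking μ r f}.Finite := by
  refine (Set.Finite.pi' fun v => Set.finite_Icc (-1 : ℤ) (outdeg μ {v} v)).subset ?_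
  intro f ⟨hroot, hnonneg, hbound⟩ v
  by_cases hv : v = r
  · subst hv
    exact ⟨hroot.ge, hroot ▸ by omega⟩
  · obtain ⟨w, hw, hlt⟩ := hbound {v} (Finset.singleton_nonempty v) (by simpa using Ne.symm hv)
    rw [Finset.mem_singleton.mp hw] at hlt
    exact ⟨by linarith [hnonneg v hv], hlt.le⟩

noncomputable def parkingFunctions (μ : V → V → ℕ) (r : V) : Finset (V → ℤ) :=
  (isParking_finite μ r).toFinset

@[simp]
theorem mem_parkingFunctions {μ : V → V → ℕ} {r : V} {f : V → ℤ} :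
    f ∈ parkingFunctions μ r ↔ IsParking μ r f :=
  Set.Finite.mem_toFinset _

def parkingWeight (r : V) (f : V → ℤ) : ℕ :=
  (∑ v ∈ Finset.univ.erase r, f v).toNat

theorem Qpoly_eq_sum (μ : V → V → ℕ) (r : V) :
    Qpoly μ r = ∑ f ∈ parkingFunctions μ r, Polynomial.X ^ parkingWeight r f :=
  finsum_mem_eq_finite_toFinset_sum _ (isParking_finite μ r)

theorem IsParking.sum_erase_nonneg {μ : V → V → ℕ} {r : V} {f : V → ℤ}
    (hf : IsParking μ r f) : 0 ≤ ∑ v ∈ Finset.univ.erase r, f v :=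
  Finset.sum_nonneg fun v hv => hf.2.1 v (Finset.ne_of_mem_erase hv)

section Deletion

variable {μ : V → V → ℕ} {r i : V}

theorem outdeg_deleteEdge (hμ : 1 ≤ μ i r) {I : Finset V} (hrI : r ∉ I) {v : V} (hv : v ≠ r) :
    (outdeg (deleteEdge μ r i) I v : ℤ) = outdeg μ I v - (Pi.single i 1 : V → ℤ) v := by
  have key : outdeg (deleteEdge μ r i) I v + (if v = i then 1 else 0) = outdeg μ I v := by
    simp only [outdeg, ← deleteEdge_add_ite hμ hv, Finset.sum_add_distrib]
    by_cases hvi : v = i <;> simp [hvi, hrI]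
  rw [Pi.single_apply, ← key]
  push_cast
  ring

theorem isParking_deleteEdge_iff (hri : r ≠ i) (hμ : 1 ≤ μ i r) (f : V → ℤ) :
    IsParking (deleteEdge μ r i) r (f - Pi.single i 1) ↔ IsParking μ r f ∧ f i ≠ 0 := by
  have hnonneg : (∀ v, v ≠ r → 0 ≤ f v - (Pi.single i 1 : V → ℤ) v) ↔
      (∀ v, v ≠ r → 0 ≤ f v) ∧ f i ≠ 0 := by
    refine ⟨fun h => ⟨fun v hv => ?_, fun h0 => ?_⟩, fun ⟨h, hi⟩ v hv => ?_⟩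
    · have := h v hv
      rw [Pi.single_apply] at this
      split_ifs at this <;> omega
    · simpa [h0] using h i hri.symm
    · have := h v hv
      rw [Pi.single_apply]
      split_ifs with hvi
      · subst hvi; omega
      · simpa using this
  have hbound : (∀ I : Finset V, I.Nonempty → r ∉ I →
        ∃ v ∈ I, f v - (Pi.single i 1 : V → ℤ) v < outdeg (deleteEdge μ r i) I v) ↔
      ∀ I : Finset V, I.Nonempty → r ∉ I → ∃ v ∈ I, f v < outdeg μ I v :=
    forall_congr' fun I => imp_congr_right fun _ => forall_congr' fun hrI =>
      exists_congr fun v => and_congr_right fun hv => by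
        rw [outdeg_deleteEdge hμ hrI (ne_of_mem_of_not_mem hv hrI), sub_lt_sub_iff_right]
  simp only [IsParking, Pi.sub_apply, Pi.single_eq_of_ne hri, sub_zero, hnonneg, hbound]
  tauto

theorem parkingWeight_sub_single (hir : i ≠ r) {f : V → ℤ}
    (h : 0 ≤ ∑ v ∈ Finset.univ.erase r, (f - Pi.single i 1 : V → ℤ) v) :
    parkingWeight r f = parkingWeight r (f - Pi.single i 1) + 1 := by
  have hsum : ∑ v ∈ Finset.univ.erase r, (f - Pi.single i 1 : V → ℤ) v =
      ∑ v ∈ Finset.univ.erase r, f v - 1 := by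
    simp [Finset.sum_sub_distrib, Finset.sum_pi_single', hir]
  rw [hsum] at h
  rw [parkingWeight, parkingWeight, hsum]
  omega

theorem sum_filter_ne_zero_eq_X_mul_Qpoly_deleteEdge (hri : r ≠ i) (hμ : 1 ≤ μ i r) :
    ∑ f ∈ parkingFunctions μ r with f i ≠ 0, Polynomial.X ^ parkingWeight r f =
      Polynomial.X * Qpoly (deleteEdge μ r i) r := by
  rw [Qpoly_eq_sum, Finset.mul_sum]
  refine Finset.sum_equiv (Equiv.subRight (Pi.single i 1))
    (fun f => by simp [isParking_deleteEdge_iff hri hμ]) fun f hf => ?_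
  have hdel := (isParking_deleteEdge_iff hri hμ f).mpr (by simpa using hf)
  rw [Equiv.subRight_apply, ← pow_succ', parkingWeight_sub_single hri.symm hdel.sum_erase_nonneg]

end Deletion

section Contraction

variable {μ : V → V → ℕ} {r i : V}

theorem parkingWeight_extendByZero (hri : r ≠ i) (g : {v : V // v ≠ i} → ℤ) :
    parkingWeight r (extendByZero i g) = parkingWeight ⟨r, hri⟩ g := by
  unfold parkingWeight
  rw [Finset.sum_erase_eq_sub (Finset.mem_univ _), Finset.sum_erase_eq_sub (Finset.mem_univ _),
    Fintype.sum_eq_add_sum_subtype_ne _ i]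
  simp only [extendByZero_self, extendByZero_coe, zero_add]
  rw [← extendByZero_coe g ⟨r, hri⟩]

theorem compl_map_subtype (I : Finset {v : V // v ≠ i}) :
    (I.map (Function.Embedding.subtype _))ᶜ =
      insert i (Iᶜ.map (Function.Embedding.subtype _)) := by
  ext j
  by_cases hj : j = i
  · subst hj; simp
  · simp [hj]

theorem outdeg_contractEdge (hri : r ≠ i) {I : Finset {v : V // v ≠ i}} (hrI : ⟨r, hri⟩ ∉ I)
    {v : {v : V // v ≠ i}} (hv : v.val ≠ r) :
    outdeg (contractEdge μ r i) I v = outdeg μ (I.map (Function.Embedding.subtype _)) v := by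
  have hr : (⟨r, hri⟩ : {v : V // v ≠ i}) ∈ Iᶜ := Finset.mem_compl.mpr hrI
  simp only [outdeg, contractEdge_apply_of_ne hri hv, Finset.sum_add_distrib, compl_map_subtype]
  rw [Finset.sum_insert (by simp), Finset.sum_map, Finset.sum_ite_eq_of_mem' _ _ _ hr, add_comm]
  rfl

theorem isParking_contractEdge_iff (hri : r ≠ i) (hμ : 1 ≤ μ i r) (g : {v : V // v ≠ i} → ℤ) :
    IsParking (contractEdge μ r i) ⟨r, hri⟩ g ↔ IsParking μ r (extendByZero i g) := by
  have hroot : extendByZero i g r = g ⟨r, hri⟩ := extendByZero_coe g ⟨r, hri⟩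
  have hnonneg : (∀ w, w ≠ ⟨r, hri⟩ → 0 ≤ g w) ↔ ∀ v, v ≠ r → 0 ≤ extendByZero i g v := by
    refine ⟨fun h v hv => ?_, fun h w hw => ?_⟩
    · by_cases hvi : v = i
      · simp [hvi]
      · simpa [extendByZero, hvi] using h ⟨v, hvi⟩ (by simpa [Subtype.ext_iff] using hv)
    · simpa using h w (fun hwr => hw (Subtype.ext hwr))
  simp only [IsParking, hroot, hnonneg, and_congr_right_iff]
  intro _ _
  constructor
  · intro h I hI hrI
    by_cases hiI : i ∈ I
    · refine ⟨i, hiI, ?_⟩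
      have : μ i r ≤ outdeg μ I i :=
        Finset.single_le_sum (fun _ _ => Nat.zero_le _) (Finset.mem_compl.mpr hrI)
      simp only [extendByZero_self]
      omega
    · have hmap : (I.subtype (· ≠ i)).map (Function.Embedding.subtype _) = I :=
        Finset.subtype_map_of_mem fun v hv => ne_of_mem_of_not_mem hv hiI
      have hrI' : ⟨r, hri⟩ ∉ I.subtype (· ≠ i) := by simpa using hrI
      obtain ⟨w, hw, hlt⟩ := h (I.subtype (· ≠ i)) (by rwa [← Finset.map_nonempty, hmap]) hrI'
      refine ⟨w, by simpa using hw, ?_⟩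
      rwa [outdeg_contractEdge hri hrI' fun hwr => ne_of_mem_of_not_mem hw hrI' (Subtype.ext hwr),
        hmap, ← extendByZero_coe g w] at hlt
  · intro h I hI hrI
    obtain ⟨v, hv, hlt⟩ := h (I.map (Function.Embedding.subtype _)) hI.map (by simp [hri, hrI])
    obtain ⟨w, hw, rfl⟩ := Finset.mem_map.mp hv
    refine ⟨w, hw, ?_⟩
    rwa [outdeg_contractEdge hri hrI fun hwr => ne_of_mem_of_not_mem hw hrI (Subtype.ext hwr),
      ← extendByZero_coe g w]

theorem sum_filter_eq_zero_eq_Qpoly_contractEdge (hri : r ≠ i) (hμ : 1 ≤ μ i r) :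
    ∑ f ∈ parkingFunctions μ r with f i = 0, Polynomial.X ^ parkingWeight r f =
      Qpoly (contractEdge μ r i) ⟨r, hri⟩ := by
  have himage : {f ∈ parkingFunctions μ r | f i = 0} =
      (parkingFunctions (contractEdge μ r i) ⟨r, hri⟩).image (extendByZero i) := by
    ext f
    simp only [Finset.mem_filter, mem_parkingFunctions, Finset.mem_image,
      isParking_contractEdge_iff hri hμ]
    constructor
    · rintro ⟨hf, hfi⟩
      exact ⟨_, by rwa [extendByZero_restrict hfi], extendByZero_restrict hfi⟩
    · rintro ⟨g, hg, rfl⟩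
      exact ⟨hg, extendByZero_self g⟩
  rw [himage, Finset.sum_image extendByZero_injective.injOn, Qpoly_eq_sum]
  simp only [parkingWeight_extendByZero hri]

end Contraction

theorem Qpoly_eq_X_mul_Qpoly_deleteEdge_add_Qpoly_contractEdge {μ : V → V → ℕ} {r i : V}
    (hri : r ≠ i) (hμ : 1 ≤ μ i r) :
    Qpoly μ r =
      Polynomial.X * Qpoly (deleteEdge μ r i) r + Qpoly (contractEdge μ r i) ⟨r, hri⟩ := by
  rw [← sum_filter_ne_zero_eq_X_mul_Qpoly_deleteEdge hri hμ,
    ← sum_filter_eq_zero_eq_Qpoly_contractEdge hri hμ, Finset.sum_filter_not_add_sum_filter,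
    Qpoly_eq_sum]

theorem parking_deletion_contraction_root_general {n : ℕ}
    (μ : Fin (n + 1) → Fin (n + 1) → ℕ) (hsym : ∀ i j, μ i j = μ j i)
    (i : Fin (n + 1)) (hi : i ≠ Fin.last n) (hedge : 1 ≤ μ (Fin.last n) i) :
    Qpoly μ (Fin.last n) =
      Polynomial.X * Qpoly (deleteEdge μ (Fin.last n) i) (Fin.last n) +
        Qpoly (contractEdge μ (Fin.last n) i) ⟨Fin.last n, hi.symm⟩ :=
  Qpoly_eq_X_mul_Qpoly_deleteEdge_add_Qpoly_contractEdge hi.symm (hsym i _ ▸ hedge)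

/-- Deletion–contraction for an edge `e = {n,i}` incident to the root `n` which is
neither a loop nor a bridge: `Q_G(q) = q ⬝ Q_{G-e}(q) + Q_{G∖e}(q)`. -/
theorem parking_deletion_contraction_root {n : ℕ}
    (μ : Fin (n + 1) → Fin (n + 1) → ℕ) (hsym : ∀ i j, μ i j = μ j i)
    (hconn : (supportGraph μ).Connected)
    (i : Fin (n + 1)) (hi : i ≠ Fin.last n) (hedge : 1 ≤ μ (Fin.last n) i)
    (hconn' : (supportGraph (deleteEdge μ (Fin.last n) i)).Connected) :
    Qpoly μ (Fin.last n) =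
      Polynomial.X * Qpoly (deleteEdge μ (Fin.last n) i) (Fin.last n) +
        Qpoly (contractEdge μ (Fin.last n) i) ⟨Fin.last n, hi.symm⟩ :=
  parking_deletion_contraction_root_general μ hsym i hi hedge
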